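/- Under the model rollout setup, consider a second model rollout (s̄_i, ā_i) generated by the same policy π and model f̂ from a (possibly different) constant initial state s̄₀ ∈ S. Then for every i ≥ 1 and every θ ∈ Θ, ‖D_θ ŝ_i(θ) − D_θ s̄_i(θ)‖ ≤ ( 2M·K̂(i−1) + 2·L_f̂·L_θ ) · ∑_{j=0}^{i−1} M^j, where M = L_f̂·(1 + L_π) and K̂(i) = (1 + L_π)·L_f̂·L_θ·∑_{j=0}^{i−1} M^j + L_θ. -/

import Mathlib

/-!
By the chain rule, `‖D ŝ_{i+1}‖ ≤ M ‖D ŝ_i‖ + L_f̂ L_θ` with `M = L_f̂ (1 + L_π)`, so by induction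
every rollout satisfies `‖D ŝ_i‖ ≤ L_f̂ L_θ ∑_{j<i} M^j`, whatever its initial state. The triangle
inequality bounds the difference of two rollouts by twice this, which is at most the stated bound
because `M K̂(i-1) ≥ 0`.
-/

open Finset

/-- Model rollout: states `ŝ_i : Θ → S` generated from the constant initial state `s₀`
by `ŝ₀(θ) = s₀`, `ŝ_{i+1}(θ) = f(ŝ_i(θ), π(θ, ŝ_i(θ)))`. -/
def sHat {Θ S A : Type*} (π : Θ × S → A) (f : S × A → S) (s₀ : S) : ℕ → Θ → S
  | 0 => fun _ => s₀
  | (i + 1) => fun θ => f (sHat π f s₀ i θ, π (θ, sHat π f s₀ i θ))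

/-- Model rollout: actions `â_i(θ) = π(θ, ŝ_i(θ))`. -/
def aHat {Θ S A : Type*} (π : Θ × S → A) (f : S × A → S) (s₀ : S) (i : ℕ) : Θ → A :=
  fun θ => π (θ, sHat π f s₀ i θ)

/-- `K̂(i) = (1 + L_π) · L_f̂ · L_θ · ∑_{j=0}^{i−1} (L_f̂ (1 + L_π))^j + L_θ`. -/
noncomputable def Khat (Lπ Lf Lθ : ℝ) (i : ℕ) : ℝ :=
  (1 + Lπ) * Lf * Lθ * ∑ j ∈ Finset.range i, (Lf * (1 + Lπ)) ^ j + Lθ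

section ChainRule

open ContinuousLinearMap

variable {E F G H : Type*}
  [NormedAddCommGroup E] [NormedSpace ℝ E]
  [NormedAddCommGroup F] [NormedSpace ℝ F]
  [NormedAddCommGroup G] [NormedSpace ℝ G]
  [NormedAddCommGroup H] [NormedSpace ℝ H]

theorem norm_fderiv_comp_prodMk_le {f : F × G → H} {g : E → F} {h : E → G} {x : E}
    (hf : DifferentiableAt ℝ f (g x, h x)) (hg : DifferentiableAt ℝ g x)
    (hh : DifferentiableAt ℝ h x) :
    ‖fderiv ℝ (fun x => f (g x, h x)) x‖ ≤
      ‖fderiv ℝ (fun y => f (y, h x)) (g x)‖ * ‖fderiv ℝ g x‖ +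
        ‖fderiv ℝ (fun z => f (g x, z)) (h x)‖ * ‖fderiv ℝ h x‖ := by
  set L := fderiv ℝ f (g x, h x)
  have h_fst : fderiv ℝ (fun y => f (y, h x)) (g x) = L.comp (inl ℝ F G) :=
    (hf.hasFDerivAt.comp (g x) (hasFDerivAt_prodMk_left (g x) (h x))).fderiv
  have h_snd : fderiv ℝ (fun z => f (g x, z)) (h x) = L.comp (inr ℝ F G) :=
    (hf.hasFDerivAt.comp (h x) (hasFDerivAt_prodMk_right (g x) (h x))).fderiv
  have h_comp : fderiv ℝ (fun x => f (g x, h x)) x =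
      (L.comp (inl ℝ F G)).comp (fderiv ℝ g x) + (L.comp (inr ℝ F G)).comp (fderiv ℝ h x) := by
    refine (hf.hasFDerivAt.comp x (hg.hasFDerivAt.prodMk hh.hasFDerivAt)).fderiv.trans ?_
    ext v
    exact (L.comp_inl_add_comp_inr _).symm
  rw [h_comp, h_fst, h_snd]
  exact (norm_add_le _ _).trans (add_le_add (opNorm_comp_le _ _) (opNorm_comp_le _ _))

end ChainRule

section Rollout

variable {Θ S A : Type*}
  [NormedAddCommGroup Θ] [NormedSpace ℝ Θ]
  [NormedAddCommGroup S] [NormedSpace ℝ S]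
  [NormedAddCommGroup A] [NormedSpace ℝ A]
  {π : Θ × S → A} {f : S × A → S} {Lθ Lπ Lf : ℝ}

theorem differentiable_sHat (hπ : Differentiable ℝ π) (hf : Differentiable ℝ f) (s₀ : S) :
    ∀ i, Differentiable ℝ (sHat π f s₀ i)
  | 0 => differentiable_const s₀
  | i + 1 => fun θ =>
    have hs := differentiable_sHat hπ hf s₀ i θ
    (hf _).comp θ (hs.prodMk ((hπ _).comp θ (differentiableAt_id.prodMk hs)))

theorem norm_fderiv_sHat_le (hπ : Differentiable ℝ π) (hf : Differentiable ℝ f)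
    (hπθ : ∀ p : Θ × S, ‖fderiv ℝ (fun θ : Θ => π (θ, p.2)) p.1‖ ≤ Lθ)
    (hπs : ∀ p : Θ × S, ‖fderiv ℝ (fun s : S => π (p.1, s)) p.2‖ ≤ Lπ)
    (hfs : ∀ p : S × A, ‖fderiv ℝ (fun s : S => f (s, p.2)) p.1‖ ≤ Lf)
    (hfa : ∀ p : S × A, ‖fderiv ℝ (fun a : A => f (p.1, a)) p.2‖ ≤ Lf) (s₀ : S) (θ : Θ) :
    ∀ i, ‖fderiv ℝ (sHat π f s₀ i) θ‖ ≤ Lf * Lθ * ∑ j ∈ range i, (Lf * (1 + Lπ)) ^ j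
  | 0 => by simp [sHat]
  | i + 1 => by
    have hLθ : 0 ≤ Lθ := (norm_nonneg _).trans (hπθ 0)
    have hLπ : 0 ≤ Lπ := (norm_nonneg _).trans (hπs 0)
    have hLf : 0 ≤ Lf := (norm_nonneg _).trans (hfs 0)
    set s := sHat π f s₀ i
    have hs := differentiable_sHat hπ hf s₀ i θ
    have hDs := norm_fderiv_sHat_le hπ hf hπθ hπs hfs hfa s₀ θ i
    have ha : DifferentiableAt ℝ (fun θ => π (θ, s θ)) θ :=
      (hπ _).comp θ (differentiableAt_id.prodMk hs)
    have hDa : ‖fderiv ℝ (fun θ => π (θ, s θ)) θ‖ ≤ Lθ + Lπ * ‖fderiv ℝ s θ‖ := by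
      refine (norm_fderiv_comp_prodMk_le (hπ _) differentiableAt_id hs).trans ?_
      rw [fderiv_id, ← mul_one Lθ]
      gcongr
      exacts [hπθ (θ, s θ), ContinuousLinearMap.norm_id_le, hπs (θ, s θ)]
    calc ‖fderiv ℝ (sHat π f s₀ (i + 1)) θ‖
        ≤ Lf * ‖fderiv ℝ s θ‖ + Lf * ‖fderiv ℝ (fun θ => π (θ, s θ)) θ‖ := by
          refine (norm_fderiv_comp_prodMk_le (hf _) hs ha).trans ?_
          gcongr
          exacts [hfs (s θ, π (θ, s θ)), hfa (s θ, π (θ, s θ))]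
      _ ≤ Lf * (1 + Lπ) * ‖fderiv ℝ s θ‖ + Lf * Lθ := by
          linarith [mul_le_mul_of_nonneg_left hDa hLf]
      _ ≤ Lf * (1 + Lπ) * (Lf * Lθ * ∑ j ∈ range i, (Lf * (1 + Lπ)) ^ j) + Lf * Lθ := by
          gcongr
      _ = Lf * Lθ * ∑ j ∈ range (i + 1), (Lf * (1 + Lπ)) ^ j := by
          rw [geom_sum_succ]; ring

end Rollout

/-- **Stability of pathwise state derivatives w.r.t. the initial condition** (Lemma B.2,
state part). Two model rollouts with the same policy and model started from `s₀` and
`s̄₀` satisfy, for `i ≥ 1`,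
`‖D_θ ŝ_i(θ) − D_θ s̄_i(θ)‖ ≤ (2 M K̂(i−1) + 2 L_f̂ L_θ) ∑_{j<i} M^j`,
`M = L_f̂ (1 + L_π)`. -/
theorem stmt5 {Θ S A : Type*}
    [NormedAddCommGroup Θ] [NormedSpace ℝ Θ]
    [NormedAddCommGroup S] [NormedSpace ℝ S]
    [NormedAddCommGroup A] [NormedSpace ℝ A]
    (π : Θ × S → A) (f : S × A → S) (s₀ sbar₀ : S)
    (Lθ Lπ Lf : ℝ)
    (hπdiff : Differentiable ℝ π)
    (hπθ : ∀ p : Θ × S, ‖fderiv ℝ (fun θ : Θ => π (θ, p.2)) p.1‖ ≤ Lθ)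
    (hπs : ∀ p : Θ × S, ‖fderiv ℝ (fun s : S => π (p.1, s)) p.2‖ ≤ Lπ)
    (hfdiff : Differentiable ℝ f)
    (hfs : ∀ p : S × A, ‖fderiv ℝ (fun s : S => f (s, p.2)) p.1‖ ≤ Lf)
    (hfa : ∀ p : S × A, ‖fderiv ℝ (fun a : A => f (p.1, a)) p.2‖ ≤ Lf) :
    ∀ i : ℕ, 1 ≤ i → ∀ θ : Θ,
      ‖fderiv ℝ (sHat π f s₀ i) θ - fderiv ℝ (sHat π f sbar₀ i) θ‖ ≤
        (2 * (Lf * (1 + Lπ)) * Khat Lπ Lf Lθ (i - 1) + 2 * Lf * Lθ) *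
          ∑ j ∈ Finset.range i, (Lf * (1 + Lπ)) ^ j := by
  intro i _ θ
  have hLθ : 0 ≤ Lθ := (norm_nonneg _).trans (hπθ 0)
  have hLπ : 0 ≤ Lπ := (norm_nonneg _).trans (hπs 0)
  have hLf : 0 ≤ Lf := (norm_nonneg _).trans (hfs 0)
  have hK : 0 ≤ Khat Lπ Lf Lθ (i - 1) := by unfold Khat; positivity
  have bound := norm_fderiv_sHat_le hπdiff hfdiff hπθ hπs hfs hfa
  calc ‖fderiv ℝ (sHat π f s₀ i) θ - fderiv ℝ (sHat π f sbar₀ i) θ‖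
      ≤ ‖fderiv ℝ (sHat π f s₀ i) θ‖ + ‖fderiv ℝ (sHat π f sbar₀ i) θ‖ := norm_sub_le _ _
    _ ≤ 2 * Lf * Lθ * ∑ j ∈ range i, (Lf * (1 + Lπ)) ^ j := by
        linarith [bound s₀ θ i, bound sbar₀ θ i]
    _ ≤ _ := by gcongr; exact le_add_of_nonneg_left (by positivity)
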